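/- arXiv:2305.08098 — 4 statements merged into one kernel-verified Lean document; each statement's English description precedes it below -/
import Mathlib

section
/- Let f be continuously differentiable on a neighborhood of x₀, and for each W > 0 let w_W : ℝ → ℝ be nonnegative on (0,W], zero outside (0,W], with ∫₀^W w_W(t) dt = 1. Then the limit as W → 0⁺ of (∫₀^W f(x₀+t)·w_W(t) dt − ∫₀^W f(x₀−t)·w_W(t) dt) / (2·∫₀^W t·w_W(t) dt) exists and equals f'(x₀). -/
/-! The numerator is `∫₀^W (f(x₀+t) - f(x₀-t)) w_W(t) dt`, and the central difference
`f(x₀+t) - f(x₀-t)` equals `2 f'(x₀) t + o(t)`. On `(0, W]` with `W` small the error is at most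
`ε t`, so, `w_W` being nonnegative, the numerator is `2 f'(x₀) ∫ t w_W + O(ε ∫ t w_W)`, while
`∫ t w_W > 0` because `w_W` has positive mass on `(0, W]`. -/

open MeasureTheory intervalIntegral Filter Set Topology Asymptotics

theorem HasDerivAt.isLittleO_central_difference {𝕜 E : Type*} [NontriviallyNormedField 𝕜]
    [NormedAddCommGroup E] [NormedSpace 𝕜 E] {f : 𝕜 → E} {f' : E} {x : 𝕜}
    (hf : HasDerivAt f f' x) :
    (fun t => f (x + t) - f (x - t) - (2 * t) • f') =o[𝓝 0] id := by
  have hright := hasDerivAt_iff_isLittleO_nhds_zero.1 hf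
  have hleft : (fun t => f (x + -t) - f x - (-t) • f') =o[𝓝 0] fun t => t :=
    isLittleO_neg_right.1 (hright.comp_tendsto (continuous_neg.tendsto' (0 : 𝕜) 0 neg_zero))
  refine (hright.sub hleft).congr (fun t => ?_) fun _ => rfl
  simp only [← sub_eq_add_neg, neg_smul, two_mul, add_smul]
  abel

theorem Filter.Eventually.eventually_forall_Ioc {α : Type*} [LinearOrder α] [TopologicalSpace α]
    [OrderTopology α] [NoMaxOrder α] {p : α → Prop} {a : α} (h : ∀ᶠ t in 𝓝[>] a, p t) :
    ∀ᶠ b in 𝓝[>] a, ∀ t ∈ Ioc a b, p t := by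
  obtain ⟨u, hau, hu⟩ := mem_nhdsGT_iff_exists_Ioo_subset.1 h
  filter_upwards [Ioo_mem_nhdsGT hau] with b hb t ht
  exact hu ⟨ht.1, ht.2.trans_lt hb.2⟩

namespace intervalIntegral

theorem integral_id_mul_pos {w : ℝ → ℝ} {W : ℝ} (hW : 0 ≤ W)
    (hw : ∀ t ∈ Ioc 0 W, 0 ≤ w t) (hint : 0 < ∫ t in 0..W, w t) :
    0 < ∫ t in 0..W, t * w t := by
  have hwi : IntervalIntegrable w volume 0 W := intervalIntegrable_of_integral_ne_zero hint.ne'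
  have hae : ∀ g : ℝ → ℝ, (∀ t ∈ Ioc 0 W, 0 ≤ g t) → 0 ≤ᵐ[volume.restrict (uIoc 0 W)] g :=
    fun g hg => by
      rw [uIoc_of_le hW]
      exact (ae_restrict_iff' measurableSet_Ioc).2 (ae_of_all _ hg)
  have hsupp : Function.support (fun t => t * w t) ∩ Ioc 0 W = Function.support w ∩ Ioc 0 W := by
    ext t
    simp +contextual [Function.mem_support, ne_of_gt]
  obtain ⟨hW, hμ⟩ := (integral_pos_iff_support_of_nonneg_ae' (hae w hw) hwi).1 hint
  refine (integral_pos_iff_support_of_nonneg_ae' (hae _ fun t ht => ?_) ?_).2 ⟨hW, ?_⟩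
  · exact mul_nonneg ht.1.le (hw t ht)
  · exact hwi.continuousOn_mul continuousOn_id
  · rwa [hsupp]

theorem abs_integral_sub_const_mul_integral_le {μ : Measure ℝ} {g h : ℝ → ℝ} {a b c ε : ℝ}
    (hab : a ≤ b) (hg : IntervalIntegrable g μ a b) (hh : IntervalIntegrable h μ a b)
    (hbound : ∀ t ∈ Ioc a b, |g t - c * h t| ≤ ε * h t) :
    |(∫ t in a..b, g t ∂μ) - c * ∫ t in a..b, h t ∂μ| ≤ ε * ∫ t in a..b, h t ∂μ := by
  rw [← integral_const_mul, ← integral_sub hg (hh.const_mul c), ← integral_const_mul]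
  exact norm_integral_le_of_norm_le (f := fun t => g t - c * h t) hab (ae_of_all _ hbound) (hh.const_mul ε)

end intervalIntegral

section Kernel

variable {w : ℝ → ℝ → ℝ}

theorem eventually_intervalIntegrable_mul_kernel (hnorm : ∀ W > (0 : ℝ), ∫ t in 0..W, w W t = 1)
    {φ : ℝ → ℝ} (hφ : ∀ᶠ t in 𝓝 0, ContinuousAt φ t) :
    ∀ᶠ W in 𝓝[>] 0, IntervalIntegrable (fun t => φ t * w W t) volume 0 W := by
  obtain ⟨δ, hδ, hcont⟩ := Metric.eventually_nhds_iff.1 hφ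
  filter_upwards [Ioo_mem_nhdsGT hδ] with W hW
  have hw : IntervalIntegrable (w W) volume 0 W :=
    intervalIntegrable_of_integral_ne_zero (by rw [hnorm W hW.1]; exact one_ne_zero)
  refine hw.continuousOn_mul (continuousOn_of_forall_continuousAt fun t ht => hcont ?_)
  rw [uIcc_of_le hW.1.le] at ht
  rw [Real.dist_eq, sub_zero, abs_of_nonneg ht.1]
  exact ht.2.trans_lt hW.2

theorem tendsto_integral_mul_div_integral_id_mul
    (hnonneg : ∀ W > (0 : ℝ), ∀ t ∈ Ioc 0 W, 0 ≤ w W t)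
    (hnorm : ∀ W > (0 : ℝ), ∫ t in 0..W, w W t = 1) {φ : ℝ → ℝ} {c : ℝ}
    (hφc : ∀ᶠ t in 𝓝 0, ContinuousAt φ t) (hφ : (fun t => φ t - c * t) =o[𝓝[>] 0] id) :
    Tendsto (fun W => (∫ t in 0..W, φ t * w W t) / ∫ t in 0..W, t * w W t) (𝓝[>] 0) (𝓝 c) := by
  rw [Metric.tendsto_nhds]
  intro ε hε
  filter_upwards [self_mem_nhdsWithin, (hφ.def (half_pos hε)).eventually_forall_Ioc,
    eventually_intervalIntegrable_mul_kernel hnorm hφc,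
    eventually_intervalIntegrable_mul_kernel hnorm (.of_forall fun _ => continuousAt_id)]
    with W (hW : 0 < W) hsmall hφw htw
  have hD : 0 < ∫ t in 0..W, t * w W t :=
    integral_id_mul_pos hW.le (hnonneg W hW) (by rw [hnorm W hW]; exact one_pos)
  have hbound : ∀ t ∈ Ioc 0 W, |φ t * w W t - c * (t * w W t)| ≤ ε / 2 * (t * w W t) := by
    intro t ht
    have hwt := hnonneg W hW t ht
    calc |φ t * w W t - c * (t * w W t)| = |φ t - c * t| * w W t := by
          rw [← mul_assoc, ← sub_mul, abs_mul, abs_of_nonneg hwt]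
      _ ≤ ε / 2 * t * w W t := by
          gcongr
          simpa [abs_of_pos ht.1] using hsmall t ht
      _ = ε / 2 * (t * w W t) := mul_assoc _ _ _
  have hest := abs_integral_sub_const_mul_integral_le hW.le hφw htw hbound
  rw [Real.dist_eq, div_sub' hD.ne', abs_div, abs_of_pos hD, div_lt_iff₀ hD, mul_comm _ c]
  exact hest.trans_lt (mul_lt_mul_of_pos_right (half_lt_self hε) hD)

end Kernel

theorem tao_derivative_eq_deriv_general
    (f : ℝ → ℝ) (x₀ : ℝ) (hf : ContDiffAt ℝ 1 f x₀)
    (w : ℝ → ℝ → ℝ)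
    (hnonneg : ∀ W > (0:ℝ), ∀ t ∈ Set.Ioc (0:ℝ) W, 0 ≤ w W t)
    (hnorm : ∀ W > (0:ℝ), (∫ t in (0:ℝ)..W, w W t) = 1) :
    Tendsto
      (fun W : ℝ =>
        ((∫ t in (0:ℝ)..W, f (x₀ + t) * w W t) -
          ∫ t in (0:ℝ)..W, f (x₀ - t) * w W t) /
        (2 * ∫ t in (0:ℝ)..W, t * w W t))
      (nhdsWithin 0 (Set.Ioi 0)) (nhds (deriv f x₀)) := by
  have hd : HasDerivAt f (deriv f x₀) x₀ := (hf.differentiableAt one_ne_zero).hasDerivAt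
  have hcont : ∀ᶠ y in 𝓝 x₀, ContinuousAt f y :=
    (hf.eventually (by simp)).mono fun y hy => hy.continuousAt
  have hplus : ∀ᶠ t in 𝓝 (0 : ℝ), ContinuousAt (fun t => f (x₀ + t)) t :=
    ((continuous_const_add x₀).tendsto' 0 x₀ (add_zero x₀)).eventually hcont |>.mono
      fun t ht => ht.comp (continuous_const_add x₀).continuousAt
  have hminus : ∀ᶠ t in 𝓝 (0 : ℝ), ContinuousAt (fun t => f (x₀ - t)) t :=
    ((continuous_sub_left x₀).tendsto' 0 x₀ (sub_zero x₀)).eventually hcont |>.mono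
      fun t ht => ht.comp (continuous_sub_left x₀).continuousAt
  have hcentral : (fun t => f (x₀ + t) - f (x₀ - t) - 2 * deriv f x₀ * t) =o[𝓝[>] 0] id :=
    (hd.isLittleO_central_difference.mono nhdsWithin_le_nhds).congr_left fun t => by
      rw [smul_eq_mul, mul_right_comm]
  have hlim := (tendsto_integral_mul_div_integral_id_mul
    (φ := fun t => f (x₀ + t) - f (x₀ - t)) hnonneg hnorm
    (hplus.and hminus |>.mono fun t ht => ht.1.sub ht.2) hcentral).div_const 2
  rw [mul_div_cancel_left₀ _ two_ne_zero] at hlim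
  refine hlim.congr' ?_
  filter_upwards [eventually_intervalIntegrable_mul_kernel hnorm hplus,
    eventually_intervalIntegrable_mul_kernel hnorm hminus] with W hplusw hminusw
  rw [← integral_sub hplusw hminusw, div_div, mul_comm _ (2 : ℝ)]
  simp only [sub_mul]

theorem tao_derivative_eq_deriv
    (f : ℝ → ℝ) (x₀ : ℝ) (hf : ContDiffAt ℝ 1 f x₀)
    (w : ℝ → ℝ → ℝ)
    (hnonneg : ∀ W > (0:ℝ), ∀ t ∈ Set.Ioc (0:ℝ) W, 0 ≤ w W t)
    (hzero : ∀ W > (0:ℝ), ∀ t ∉ Set.Ioc (0:ℝ) W, w W t = 0)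
    (hnorm : ∀ W > (0:ℝ), (∫ t in (0:ℝ)..W, w W t) = 1) :
    Tendsto
      (fun W : ℝ =>
        ((∫ t in (0:ℝ)..W, f (x₀ + t) * w W t) -
          ∫ t in (0:ℝ)..W, f (x₀ - t) * w W t) /
        (2 * ∫ t in (0:ℝ)..W, t * w W t))
      (nhdsWithin 0 (Set.Ioi 0)) (nhds (deriv f x₀)) :=
  tao_derivative_eq_deriv_general f x₀ hf w hnonneg hnorm
end

section
/- Let f and g be continuously differentiable on a neighborhood of x₀, and for each W > 0 let w_W satisfy the Normalization Constraint. Then the Tao Derivative of the product f·g at x₀ equals f'(x₀)g(x₀) + g'(x₀)f(x₀). -/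
/-!
Write `φ t = h (x₀ + t) - h (x₀ - t) - 2 t L` with `h = f g` and `L = (f g)'(x₀)`. Differentiability
of `h` at `x₀` gives `|φ t| ≤ ε t` for small `t`, and subtracting `L` from the Tao quotient leaves
`∫ φ w / (2 ∫ t w)`. Since the weight is nonnegative, this is at most `ε / 2` once the window is
small enough, whatever the shape of the weight.
-/

open MeasureTheory intervalIntegral Filter Set Topology Asymptotics

theorem HasDerivAt.isLittleO_symmetric_sub {h : ℝ → ℝ} {L x₀ : ℝ} (hd : HasDerivAt h L x₀) :
    (fun t => h (x₀ + t) - h (x₀ - t) - 2 * t * L) =o[𝓝 0] fun t => t := by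
  have hright := hasDerivAt_iff_isLittleO_nhds_zero.1 hd
  have hleft : (fun t => h (x₀ + -t) - h x₀ - (-t) • L) =o[𝓝 0] fun t => t :=
    isLittleO_neg_right.1 <| hright.comp_tendsto <| by
      simpa using (continuous_neg (G := ℝ)).tendsto 0
  refine (hright.sub hleft).congr_left fun t => ?_
  simp only [smul_eq_mul, ← sub_eq_add_neg]
  ring

theorem abs_integral_mul_le_integral_mul {φ ψ w : ℝ → ℝ} {a b : ℝ} (hab : a ≤ b)
    (hφw : IntervalIntegrable (fun t => φ t * w t) volume a b)
    (hψw : IntervalIntegrable (fun t => ψ t * w t) volume a b)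
    (hw : ∀ t ∈ Ioo a b, 0 ≤ w t) (hφψ : ∀ t ∈ Ioo a b, |φ t| ≤ ψ t) :
    |∫ t in a..b, φ t * w t| ≤ ∫ t in a..b, ψ t * w t := by
  refine (abs_integral_le_integral_abs hab).trans <|
    integral_mono_on_of_le_Ioo hab hφw.abs hψw fun t ht => ?_
  rw [abs_mul, abs_of_nonneg (hw t ht)]
  exact mul_le_mul_of_nonneg_right (hφψ t ht) (hw t ht)

noncomputable def taoQuotient (h : ℝ → ℝ) (x₀ W : ℝ) (w : ℝ → ℝ) : ℝ :=
  ((∫ t in (0:ℝ)..W, h (x₀ + t) * w t) - ∫ t in (0:ℝ)..W, h (x₀ - t) * w t) /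
    (2 * ∫ t in (0:ℝ)..W, t * w t)

theorem abs_taoQuotient_sub_le {h w : ℝ → ℝ} {x₀ W L ε : ℝ} (hW : 0 < W)
    (hw_pos : ∀ t ∈ Ioc 0 W, 0 < w t) (hw : IntervalIntegrable w volume 0 W)
    (hplus : ContinuousOn (fun t => h (x₀ + t)) (Icc 0 W))
    (hminus : ContinuousOn (fun t => h (x₀ - t)) (Icc 0 W))
    (hφ : ∀ t ∈ Icc 0 W, |h (x₀ + t) - h (x₀ - t) - 2 * t * L| ≤ ε * t) :
    |taoQuotient h x₀ W w - L| ≤ ε / 2 := by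
  rw [← uIcc_of_le hW.le] at hplus hminus
  have hip := hw.continuousOn_mul hplus
  have him := hw.continuousOn_mul hminus
  have hit : IntervalIntegrable (fun t => t * w t) volume 0 W := hw.continuousOn_mul continuousOn_id
  have hD : 0 < ∫ t in (0:ℝ)..W, t * w t :=
    intervalIntegral_pos_of_pos_on hit
      (fun t ht => mul_pos ht.1 (hw_pos t (Ioo_subset_Ioc_self ht))) hW
  have hsub : taoQuotient h x₀ W w - L =
      (∫ t in (0:ℝ)..W, (h (x₀ + t) - h (x₀ - t) - 2 * t * L) * w t) /
        (2 * ∫ t in (0:ℝ)..W, t * w t) := by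
    have hsplit : (∫ t in (0:ℝ)..W, (h (x₀ + t) - h (x₀ - t) - 2 * t * L) * w t) =
        (∫ t in (0:ℝ)..W, h (x₀ + t) * w t) - (∫ t in (0:ℝ)..W, h (x₀ - t) * w t) -
          2 * L * ∫ t in (0:ℝ)..W, t * w t := by
      rw [← integral_sub hip him, ← intervalIntegral.integral_const_mul,
        ← integral_sub (hip.sub him) (hit.const_mul _)]
      congr 1 with t
      ring
    rw [taoQuotient, hsplit]
    field_simp
  have hbound : |∫ t in (0:ℝ)..W, (h (x₀ + t) - h (x₀ - t) - 2 * t * L) * w t| ≤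
      ε * ∫ t in (0:ℝ)..W, t * w t := by
    rw [← intervalIntegral.integral_const_mul]
    simp_rw [← mul_assoc]
    exact abs_integral_mul_le_integral_mul hW.le
      (((hip.sub him).sub (hit.const_mul (2 * L))).congr fun t _ => by ring)
      ((hit.const_mul ε).congr fun t _ => by ring)
      (fun t ht => (hw_pos t (Ioo_subset_Ioc_self ht)).le)
      (fun t ht => hφ t (Ioo_subset_Icc_self ht))
  rw [hsub, abs_div, abs_of_pos (by positivity : (0:ℝ) < 2 * ∫ t in (0:ℝ)..W, t * w t),
    div_le_iff₀ (by positivity)]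
  linarith

theorem HasDerivAt.tendsto_taoQuotient {h : ℝ → ℝ} {L x₀ : ℝ} {w : ℝ → ℝ → ℝ}
    (hd : HasDerivAt h L x₀) (hc : ∀ᶠ x in 𝓝 x₀, ContinuousAt h x)
    (hw_pos : ∀ W > (0:ℝ), ∀ t ∈ Ioc 0 W, 0 < w W t)
    (hw : ∀ W > (0:ℝ), IntervalIntegrable (w W) volume 0 W) :
    Tendsto (fun W => taoQuotient h x₀ W (w W)) (𝓝[>] 0) (𝓝 L) := by
  rw [Metric.tendsto_nhds]
  intro ε hε
  have hwindow : Tendsto (fun W : ℝ => Icc 0 W) (𝓝[>] 0) (𝓝 0).smallSets :=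
    tendsto_const_nhds.Icc nhdsWithin_le_nhds
  have hplus : ∀ᶠ t in 𝓝 (0:ℝ), ContinuousAt (fun s => h (x₀ + s)) t :=
    (((continuous_const.add continuous_id).tendsto' 0 x₀ (add_zero x₀)).eventually hc).mono
      fun t ht => ht.comp (by fun_prop)
  have hminus : ∀ᶠ t in 𝓝 (0:ℝ), ContinuousAt (fun s => h (x₀ - s)) t :=
    (((continuous_const.sub continuous_id).tendsto' 0 x₀ (sub_zero x₀)).eventually hc).mono
      fun t ht => ht.comp (by fun_prop)
  have hsmall := hd.isLittleO_symmetric_sub.def hε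
  filter_upwards [self_mem_nhdsWithin,
    hwindow.eventually (eventually_smallSets_forall.2 (hplus.and (hminus.and hsmall)))]
    with W (hW : 0 < W) hgood
  refine lt_of_le_of_lt ?_ (half_lt_self hε)
  rw [Real.dist_eq]
  refine abs_taoQuotient_sub_le hW (hw_pos W hW) (hw W hW)
    (continuousOn_of_forall_continuousAt fun t ht => (hgood t ht).1)
    (continuousOn_of_forall_continuousAt fun t ht => (hgood t ht).2.1) fun t ht => ?_
  simpa [abs_of_nonneg ht.1] using (hgood t ht).2.2

theorem tao_derivative_product_rule_general
    (f g : ℝ → ℝ) (x₀ : ℝ)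
    (hf : ContDiffAt ℝ 1 f x₀) (hg : ContDiffAt ℝ 1 g x₀)
    (w : ℝ → ℝ → ℝ)
    (hpos : ∀ W > (0:ℝ), ∀ t ∈ Set.Ioc (0:ℝ) W, 0 < w W t)
    (hnorm : ∀ W > (0:ℝ), (∫ t in (0:ℝ)..W, w W t) = 1) :
    Tendsto
      (fun W : ℝ =>
        ((∫ t in (0:ℝ)..W, f (x₀ + t) * g (x₀ + t) * w W t) -
          ∫ t in (0:ℝ)..W, f (x₀ - t) * g (x₀ - t) * w W t) /
        (2 * ∫ t in (0:ℝ)..W, t * w W t))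
      (nhdsWithin 0 (Set.Ioi 0))
      (nhds (deriv f x₀ * g x₀ + deriv g x₀ * f x₀)) := by
  have hfg : ContDiffAt ℝ 1 (f * g) x₀ := hf.mul hg
  have hd : HasDerivAt (f * g) (deriv f x₀ * g x₀ + deriv g x₀ * f x₀) x₀ := by
    rw [mul_comm (deriv g x₀)]
    exact (hf.differentiableAt one_ne_zero).hasDerivAt.mul
      (hg.differentiableAt one_ne_zero).hasDerivAt
  -- a non-integrable weight would have integral `0`, not `1`
  have hw : ∀ W > (0:ℝ), IntervalIntegrable (w W) volume 0 W := fun W hW => by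
    by_contra hcon
    simpa [integral_undef hcon] using hnorm W hW
  exact hd.tendsto_taoQuotient ((hfg.eventually (by simp)).mono fun x hx => hx.continuousAt) hpos hw

theorem tao_derivative_product_rule
    (f g : ℝ → ℝ) (x₀ : ℝ)
    (hf : ContDiffAt ℝ 1 f x₀) (hg : ContDiffAt ℝ 1 g x₀)
    (w : ℝ → ℝ → ℝ)
    (hpos : ∀ W > (0:ℝ), ∀ t ∈ Set.Ioc (0:ℝ) W, 0 < w W t)
    (hzero : ∀ W > (0:ℝ), ∀ t ∉ Set.Ioc (0:ℝ) W, w W t = 0)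
    (hnorm : ∀ W > (0:ℝ), (∫ t in (0:ℝ)..W, w W t) = 1) :
    Tendsto
      (fun W : ℝ =>
        ((∫ t in (0:ℝ)..W, f (x₀ + t) * g (x₀ + t) * w W t) -
          ∫ t in (0:ℝ)..W, f (x₀ - t) * g (x₀ - t) * w W t) /
        (2 * ∫ t in (0:ℝ)..W, t * w W t))
      (nhdsWithin 0 (Set.Ioi 0))
      (nhds (deriv f x₀ * g x₀ + deriv g x₀ * f x₀)) :=
  tao_derivative_product_rule_general f g x₀ hf hg w hpos hnorm
end

section
/- Suppose the TGD with all kernels in each family 𝔼_W (functions satisfying the Normalization Constraint with parameter W) is unbiased within W_T > 0, in the sense that for all 0 < W₂ < W₁ ≤ W_T, all w₁ ∈ 𝔼_{W₁}, w₂ ∈ 𝔼_{W₂}, and all points x₁, x₂: f'_TGD(x₁; w₂, W₂) > f'_TGD(x₂; w₂, W₂) implies f'_TGD(x₁; w₁, W₁) > f'_TGD(x₂; w₁, W₁), where f may be taken to be the Dirac delta (equivalently, f'_TGD(x; w, W) = C·T_w(x) with C > 0). Then every kernel w ∈ 𝔼_{W₁} with W₁ ≤ W_T is strictly monotonically decreasing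 on (0, W₁]. -/
open MeasureTheory intervalIntegral

/-- The Normalization Constraint for a kernel `w` with parameter `W`. -/
def NormKernel (W : ℝ) (w : ℝ → ℝ) : Prop :=
  (∀ t ∈ Set.Ioc (0:ℝ) W, 0 < w t) ∧
  (∀ t ∉ Set.Ioc (0:ℝ) W, w t = 0) ∧
  (∫ t in (0:ℝ)..W, w t) = 1

/-- The first-order TGD operator built from kernel `w` with parameter `W`. -/
noncomputable def TGDop (W : ℝ) (w : ℝ → ℝ) : ℝ → ℝ := fun t =>
  if -W ≤ t ∧ t < 0 then w (-t)
  else if 0 < t ∧ t ≤ W then -w t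
  else 0

/-- Unbiasedness of the TGD (applied to the Dirac delta, for which the TGD is
a positive multiple of the operator `TGDop`) forces every admissible kernel to
be strictly monotonically decreasing on `(0, W₁]`. -/
theorem monotonic_constraint_necessary
    (W_T : ℝ) (hWT : 0 < W_T)
    (hne : ∀ W, 0 < W → ∃ w, NormKernel W w)
    (hpres : ∀ W₁ W₂ w₁ w₂, 0 < W₂ → W₂ < W₁ → W₁ ≤ W_T →
      NormKernel W₁ w₁ → NormKernel W₂ w₂ →
      ∀ C₁ C₂ : ℝ, 0 < C₁ → 0 < C₂ →
      ∀ x₁ x₂ : ℝ, C₂ * TGDop W₂ w₂ x₁ > C₂ * TGDop W₂ w₂ x₂ →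
        C₁ * TGDop W₁ w₁ x₁ > C₁ * TGDop W₁ w₁ x₂) :
    ∀ W₁ w₁, 0 < W₁ → W₁ ≤ W_T → NormKernel W₁ w₁ →
      ∀ x₁ x₂ : ℝ, 0 < x₂ → x₂ < x₁ → x₁ ≤ W₁ → w₁ x₁ < w₁ x₂ := by
  intro W₁ w₁ hW₁ hW₁T hk₁ x₁ x₂ hx₂ hlt hx₁
  set W₂ := (x₂ + x₁) / 2 with hW₂def
  have hW₂pos : 0 < W₂ := by simp only [hW₂def]; linarith
  have hx₂W₂ : x₂ < W₂ := by simp only [hW₂def]; linarith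
  have hW₂x₁ : W₂ < x₁ := by simp only [hW₂def]; linarith
  obtain ⟨w₂, hk₂⟩ := hne W₂ hW₂pos
  have h2 : TGDop W₂ w₂ x₁ > TGDop W₂ w₂ x₂ := by
    have e1 : TGDop W₂ w₂ x₁ = 0 := by
      simp only [TGDop]
      rw [if_neg (by push_neg; intro h; linarith), if_neg (by push_neg; intro h; linarith)]
    have e2 : TGDop W₂ w₂ x₂ = -w₂ x₂ := by
      simp only [TGDop]
      rw [if_neg (by push_neg; intro h; linarith), if_pos ⟨hx₂, le_of_lt hx₂W₂⟩]
    have hpos : 0 < w₂ x₂ := hk₂.1 x₂ ⟨hx₂, le_of_lt hx₂W₂⟩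
    rw [e1, e2]; linarith
  have key := hpres W₁ W₂ w₁ w₂ hW₂pos (lt_of_lt_of_le hW₂x₁ hx₁) hW₁T hk₁ hk₂
      1 1 one_pos one_pos x₁ x₂ (by simpa using h2)
  have e1 : TGDop W₁ w₁ x₁ = -w₁ x₁ := by
    simp only [TGDop]
    rw [if_neg (by push_neg; intro h; linarith), if_pos ⟨by linarith, hx₁⟩]
  have e2 : TGDop W₁ w₁ x₂ = -w₁ x₂ := by
    simp only [TGDop]
    rw [if_neg (by push_neg; intro h; linarith), if_pos ⟨hx₂, by linarith⟩]
  simp only [one_mul, e1, e2] at key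
  linarith
end

section
/- Let X : ℤ → ℝ be a sequence and define the step function f̂(x) = X(n) for x ∈ (n−1/2, n+1/2]. Let w satisfy the Normalization Constraint with W = N + 1/2. Then the first-order TGD of f̂ at an integer n equals the discrete convolution f̂'_TGD(n; w, N+1/2) = C₁ ∑_{i=−N}^{N} X(n+i) ∫_{i−1/2}^{i+1/2} T(−t)dt, where C₁ = 1/(2∫₀^{N+1/2} t w(t)dt) and T is the first-order TGD operator built from w. -/
open MeasureTheory intervalIntegral

lemma step_integral {w : ℝ → ℝ} {a b c : ℝ} (hab : a ≤ b)
    {F : ℝ → ℝ} (hF : ∀ t ∈ Set.Ioo a b, F t = c * w t) :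
    (∫ t in a..b, F t) = c * ∫ t in a..b, w t := by
  rw [intervalIntegral.integral_of_le hab, intervalIntegral.integral_of_le hab,
    MeasureTheory.integral_Ioc_eq_integral_Ioo, MeasureTheory.integral_Ioc_eq_integral_Ioo,
    ← MeasureTheory.integral_const_mul]
  exact MeasureTheory.setIntegral_congr_fun measurableSet_Ioo hF

lemma step_intervalIntegrable {w : ℝ → ℝ} (hw : Integrable w) {a b c : ℝ} (hab : a ≤ b)
    {F : ℝ → ℝ} (hF : ∀ t ∈ Set.Ioo a b, F t = c * w t) :
    IntervalIntegrable F volume a b := by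
  rw [intervalIntegrable_iff_integrableOn_Ioc_of_le hab]
  have h1 : IntegrableOn (fun t => c * w t) (Set.Ioo a b) := (hw.const_mul c).integrableOn
  have h2 : IntegrableOn F (Set.Ioo a b) :=
    h1.congr_fun (fun t ht => (hF t ht).symm) measurableSet_Ioo
  exact h2.congr_set_ae MeasureTheory.Ioo_ae_eq_Ioc.symm

lemma sum_Icc_neg (g : ℤ → ℝ) (N : ℕ) :
    ∑ i ∈ Finset.Icc (-(N:ℤ)) N, g i = g 0 + ∑ k ∈ Finset.Icc (1:ℤ) N, (g k + g (-k)) := by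
  induction N with
  | zero => simp
  | succ m ih =>
    have h1 : Finset.Icc (-((m:ℤ)+1)) ((m:ℤ)+1) =
        insert (-((m:ℤ)+1)) (insert ((m:ℤ)+1) (Finset.Icc (-(m:ℤ)) m)) := by
      ext x; simp [Finset.mem_Icc]; omega
    have h2 : Finset.Icc (1:ℤ) ((m:ℤ)+1) = insert ((m:ℤ)+1) (Finset.Icc (1:ℤ) m) := by
      ext x; simp [Finset.mem_Icc]; omega
    push_cast
    rw [h1, Finset.sum_insert (by simp [Finset.mem_Icc]; omega),
      Finset.sum_insert (by simp [Finset.mem_Icc]), h2,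
      Finset.sum_insert (by simp [Finset.mem_Icc]), ih]
    ring

lemma sum_Icc_eq_range (f : ℤ → ℝ) (N : ℕ) :
    ∑ i ∈ Finset.Icc (1:ℤ) N, f i = ∑ k ∈ Finset.range N, f (k+1) := by
  induction N with
  | zero => simp
  | succ m ih =>
    rw [Finset.sum_range_succ, ← ih]
    have h2 : Finset.Icc (1:ℤ) ((m:ℤ)+1) = insert ((m:ℤ)+1) (Finset.Icc (1:ℤ) m) := by
      ext x; simp [Finset.mem_Icc]; omega
    push_cast
    rw [h2, Finset.sum_insert (by simp [Finset.mem_Icc])]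
    ring
theorem discrete_TGD_of_sequence_eq_convolution
    (N : ℕ) (hN : 1 ≤ N) (W : ℝ) (hW : W = (N : ℝ) + 1 / 2)
    (w : ℝ → ℝ)
    (hpos : ∀ t ∈ Set.Ioc (0:ℝ) W, 0 < w t)
    (hzero : ∀ t ∉ Set.Ioc (0:ℝ) W, w t = 0)
    (hnorm : (∫ t in (0:ℝ)..W, w t) = 1)
    (hint : Integrable w)
    (X : ℤ → ℝ)
    (fhat : ℝ → ℝ)
    (hfhat : ∀ (n : ℤ) (x : ℝ), x ∈ Set.Ioc ((n:ℝ) - 1/2) ((n:ℝ) + 1/2) →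
      fhat x = X n)
    (T : ℝ → ℝ)
    (hT : ∀ t, T t =
      if -W ≤ t ∧ t < 0 then w (-t)
      else if 0 < t ∧ t ≤ W then -w t
      else 0)
    (C₁ : ℝ) (hC₁ : C₁ = 1 / (2 * ∫ t in (0:ℝ)..W, t * w t))
    (n : ℤ) :
    ((∫ t in (0:ℝ)..W, fhat ((n:ℝ) + t) * w t) -
      ∫ t in (0:ℝ)..W, fhat ((n:ℝ) - t) * w t) /
      (2 * ∫ t in (0:ℝ)..W, t * w t) =
    C₁ * ∑ i ∈ Finset.Icc (-(N:ℤ)) (N:ℤ),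
      X (n + i) * ∫ t in ((i:ℝ) - 1/2)..((i:ℝ) + 1/2), T (-t) := by
  have hWpos : (0:ℝ) < W := by rw [hW]; positivity
  have hW1 : (1:ℝ)/2 ≤ W := by
    rw [hW]
    have : (1:ℝ) ≤ N := by exact_mod_cast hN
    linarith
  -- pointwise facts about T
  have hTpos : ∀ t : ℝ, 0 < t → T (-t) = w t := by
    intro t ht
    rw [hT]
    rcases le_or_gt t W with h | h
    · rw [if_pos ⟨by linarith, by linarith⟩, neg_neg]
    · rw [if_neg (by rintro ⟨h1, -⟩; linarith), if_neg (by rintro ⟨h1, -⟩; linarith),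
        hzero t (by rintro ⟨-, h2⟩; linarith)]
  have hTneg : ∀ t : ℝ, 0 < t → T t = -w t := by
    intro t ht
    rw [hT]
    rcases le_or_gt t W with h | h
    · rw [if_neg (by rintro ⟨-, h2⟩; linarith), if_pos ⟨ht, h⟩]
    · rw [if_neg (by rintro ⟨-, h2⟩; linarith), if_neg (by rintro ⟨-, h2⟩; linarith),
        hzero t (by rintro ⟨-, h2⟩; linarith), neg_zero]
  -- the partition points
  set a : ℕ → ℝ := fun k => if k = 0 then 0 else (k:ℝ) - 1/2 with ha_def
  have ha0 : a 0 = 0 := rfl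
  have ha : ∀ k : ℕ, k ≠ 0 → a k = (k:ℝ) - 1/2 := fun k hk => if_neg hk
  have haW : a (N+1) = W := by
    rw [ha (N+1) (by omega), hW]; push_cast; ring
  have hmono : ∀ k : ℕ, a k ≤ a (k+1) := by
    intro k
    rcases Nat.eq_zero_or_pos k with h0 | h0
    · subst h0; rw [ha0, ha 1 one_ne_zero]; norm_num
    · rw [ha k (by omega), ha (k+1) (by omega)]; push_cast; linarith
  -- fhat on pieces
  have hfA : ∀ k : ℕ, ∀ t ∈ Set.Ioo (a k) (a (k+1)),
      fhat ((n:ℝ) + t) * w t = X (n + (k:ℤ)) * w t := by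
    intro k t ht
    obtain ⟨ht1, ht2⟩ := ht
    rw [ha (k+1) (by omega)] at ht2
    have hub : t < (k:ℝ) + 1/2 := by push_cast at ht2 ⊢; linarith
    have hlb : (k:ℝ) - 1/2 < t := by
      rcases Nat.eq_zero_or_pos k with h0 | h0
      · subst h0; rw [ha0] at ht1; simpa using by linarith
      · rwa [ha k (by omega)] at ht1
    rw [hfhat (n + (k:ℤ)) ((n:ℝ) + t) (by push_cast; constructor <;> linarith)]
  have hfB : ∀ k : ℕ, ∀ t ∈ Set.Ioo (a k) (a (k+1)),
      fhat ((n:ℝ) - t) * w t = X (n - (k:ℤ)) * w t := by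
    intro k t ht
    obtain ⟨ht1, ht2⟩ := ht
    rw [ha (k+1) (by omega)] at ht2
    have hub : t < (k:ℝ) + 1/2 := by push_cast at ht2 ⊢; linarith
    have hlb : (k:ℝ) - 1/2 < t := by
      rcases Nat.eq_zero_or_pos k with h0 | h0
      · subst h0; rw [ha0] at ht1; simpa using by linarith
      · rwa [ha k (by omega)] at ht1
    rw [hfhat (n - (k:ℤ)) ((n:ℝ) - t) (by push_cast; constructor <;> linarith)]
  -- split the two integrals
  have hA : (∫ t in (0:ℝ)..W, fhat ((n:ℝ) + t) * w t)
      = ∑ k ∈ Finset.range (N+1), X (n + (k:ℤ)) * ∫ t in a k..a (k+1), w t := by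
    have hs := intervalIntegral.sum_integral_adjacent_intervals (μ := volume)
      (f := fun t => fhat ((n:ℝ) + t) * w t) (a := a) (n := N+1)
      (fun k _ => step_intervalIntegrable hint (hmono k) (hfA k))
    rw [ha0, haW] at hs
    rw [← hs]
    exact Finset.sum_congr rfl fun k _ => step_integral (hmono k) (hfA k)
  have hB : (∫ t in (0:ℝ)..W, fhat ((n:ℝ) - t) * w t)
      = ∑ k ∈ Finset.range (N+1), X (n - (k:ℤ)) * ∫ t in a k..a (k+1), w t := by
    have hs := intervalIntegral.sum_integral_adjacent_intervals (μ := volume)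
      (f := fun t => fhat ((n:ℝ) - t) * w t) (a := a) (n := N+1)
      (fun k _ => step_intervalIntegrable hint (hmono k) (hfB k))
    rw [ha0, haW] at hs
    rw [← hs]
    exact Finset.sum_congr rfl fun k _ => step_integral (hmono k) (hfB k)
  -- the J integrals
  have hJpos : ∀ i : ℤ, 1 ≤ i →
      (∫ t in ((i:ℝ) - 1/2)..((i:ℝ) + 1/2), T (-t)) = ∫ t in ((i:ℝ) - 1/2)..((i:ℝ) + 1/2), w t := by
    intro i hi
    have hi' : (1:ℝ) ≤ (i:ℝ) := by exact_mod_cast hi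
    rw [step_integral (w := w) (c := 1) (by linarith)
      (fun t ht => by rw [hTpos t (by obtain ⟨h1, -⟩ := ht; linarith), one_mul]), one_mul]
  have hJneg : ∀ i : ℤ, 1 ≤ i →
      (∫ t in ((((-i:ℤ)):ℝ) - 1/2)..((((-i:ℤ)):ℝ) + 1/2), T (-t))
        = -(∫ t in ((i:ℝ) - 1/2)..((i:ℝ) + 1/2), w t) := by
    intro i hi
    have hi' : (1:ℝ) ≤ (i:ℝ) := by exact_mod_cast hi
    have hb1 : (((-i:ℤ)):ℝ) - 1/2 = -((i:ℝ) + 1/2) := by push_cast; ring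
    have hb2 : (((-i:ℤ)):ℝ) + 1/2 = -((i:ℝ) - 1/2) := by push_cast; ring
    rw [hb1, hb2, intervalIntegral.integral_comp_neg (f := T), neg_neg, neg_neg]
    rw [step_integral (w := w) (c := -1) (by linarith)
      (fun t ht => by rw [hTneg t (by obtain ⟨h1, -⟩ := ht; linarith)]; ring)]
    ring
  have hJ0 : (∫ t in ((((0:ℤ)):ℝ) - 1/2)..((((0:ℤ)):ℝ) + 1/2), T (-t)) = 0 := by
    have hb : (((0:ℤ)):ℝ) = 0 := by norm_num
    rw [hb]
    have hint1 : IntervalIntegrable (fun t => T (-t)) volume 0 (1/2 : ℝ) :=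
      step_intervalIntegrable hint (c := 1) (by norm_num)
        (fun t ht => by rw [hTpos t ht.1, one_mul])
    have hint2 : IntervalIntegrable (fun t => T (-t)) volume (0 - 1/2 : ℝ) 0 := by
      have h2 : IntervalIntegrable T volume 0 (1/2 : ℝ) :=
        step_intervalIntegrable hint (c := -1) (by norm_num)
          (fun t ht => by rw [hTneg t ht.1]; ring)
      have := (IntervalIntegrable.iff_comp_neg (f := T) (a := 0) (b := 1/2)).mp h2
      norm_num at this ⊢
      exact this.symm
    have hadd := intervalIntegral.integral_add_adjacent_intervals hint2 hint1
    have hleft : (∫ t in (0 - 1/2 : ℝ)..0, T (-t)) = -(∫ t in (0:ℝ)..(1/2:ℝ), w t) := by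
      have : (∫ t in (0 - 1/2 : ℝ)..0, T (-t)) = ∫ t in (-(0:ℝ))..(-(0 - 1/2 : ℝ)), T t :=
        intervalIntegral.integral_comp_neg (f := T)
      rw [this]
      norm_num
      rw [step_integral (w := w) (c := -1) (by norm_num)
        (fun t ht => by rw [hTneg t ht.1]; ring)]
      ring
    have hright : (∫ t in (0:ℝ)..(1/2:ℝ), T (-t)) = ∫ t in (0:ℝ)..(1/2:ℝ), w t := by
      rw [step_integral (w := w) (c := 1) (by norm_num)
        (fun t ht => by rw [hTpos t ht.1, one_mul]), one_mul]
    have hbb : ((0:ℝ)) + 1/2 = 1/2 := by norm_num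
    rw [hbb, ← hadd, hleft, hright]
    ring
  -- the main identity
  have hmain : ((∫ t in (0:ℝ)..W, fhat ((n:ℝ) + t) * w t) -
      ∫ t in (0:ℝ)..W, fhat ((n:ℝ) - t) * w t)
      = ∑ i ∈ Finset.Icc (-(N:ℤ)) (N:ℤ),
        X (n + i) * ∫ t in ((i:ℝ) - 1/2)..((i:ℝ) + 1/2), T (-t) := by
    rw [hA, hB, ← Finset.sum_sub_distrib,
      sum_Icc_neg (fun i => X (n + i) * ∫ t in ((i:ℝ) - 1/2)..((i:ℝ) + 1/2), T (-t)) N]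
    rw [hJ0, mul_zero, zero_add,
      sum_Icc_eq_range (fun i => X (n + i) * (∫ t in ((i:ℝ) - 1/2)..((i:ℝ) + 1/2), T (-t))
        + X (n + -i) * ∫ t in ((((-i:ℤ)):ℝ) - 1/2)..((((-i:ℤ)):ℝ) + 1/2), T (-t)) N]
    rw [Finset.sum_range_succ']
    have h00 : ((X (n + ((0:ℕ):ℤ)) * ∫ t in (a 0)..(a (0+1)), w t)
        - X (n - ((0:ℕ):ℤ)) * ∫ t in (a 0)..(a (0+1)), w t) = 0 := by norm_num
    rw [h00, add_zero]
    apply Finset.sum_congr rfl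
    intro k hk
    have hk1 : (1:ℤ) ≤ (k:ℤ) + 1 := by omega
    rw [hJpos ((k:ℤ)+1) hk1, hJneg ((k:ℤ)+1) hk1]
    have hbl : a (k+1) = (((k:ℤ)+1:ℤ):ℝ) - 1/2 := by
      rw [ha (k+1) (by omega)]; push_cast; ring
    have hbr : a (k+1+1) = (((k:ℤ)+1:ℤ):ℝ) + 1/2 := by
      rw [ha (k+1+1) (by omega)]; push_cast; ring
    rw [hbl, hbr]
    push_cast
    ring
  rw [hmain, hC₁]
  ring
end
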